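/- arXiv:2206.12953 — 3 statements merged into one kernel-verified Lean document; each statement's English description precedes it below -/
import Mathlib

section
/- In a finite MV-algebra A, for any n ≥ |A|, the map x ↦ nx (n-fold truncated sum, i.e. n-fold ⊕ where x ⊕ y = ¬x → y) satisfies n1 = 1, n0 = 0, n(x ∨ y) = nx ∨ ny and n(x ∧ y) = nx ∧ ny. -/
/-- An MV-algebra `⟨A, ⊕, ¬, 0⟩` with the standard MV-axioms. -/
class MVAlg (α : Type*) where
  add : α → α → α
  neg : α → α
  zero : α
  add_assoc : ∀ x y z : α, add x (add y z) = add (add x y) z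
  add_comm : ∀ x y : α, add x y = add y x
  add_zero : ∀ x : α, add x zero = x
  neg_neg : ∀ x : α, neg (neg x) = x
  add_neg_zero : ∀ x : α, add x (neg zero) = neg zero
  luk : ∀ x y : α, add (neg (add (neg x) y)) y = add (neg (add (neg y) x)) x

namespace MVAlg

variable {α : Type*} [MVAlg α]

/-- `1 = ¬0`. -/
def one : α := neg zero

/-- `x ∨ y = ¬(¬x ⊕ y) ⊕ y`. -/
def sup (x y : α) : α := add (neg (add (neg x) y)) y

/-- `x ∧ y = ¬(¬x ∨ ¬y)`. -/
def inf (x y : α) : α := neg (sup (neg x) (neg y))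

/-- `nx = x ⊕ ⋯ ⊕ x` (`n` times). -/
def nsum : ℕ → α → α
  | 0, _ => zero
  | n + 1, x => add x (nsum n x)

end MVAlg

namespace MVAlg

variable {α : Type*} [MVAlg α]

-- ### auxiliary development
instance : Std.Associative (add (α := α)) := ⟨fun a b c => (add_assoc a b c).symm⟩
instance : Std.Commutative (add (α := α)) := ⟨add_comm⟩

theorem zero_add' (x : α) : add zero x = x := by rw [add_comm]; exact add_zero x
theorem add_one (x : α) : add x one = one := add_neg_zero x
theorem one_add (x : α) : add one x = one := by rw [add_comm]; exact add_one x
theorem neg_one : (neg one : α) = zero := neg_neg zero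

theorem neg_add_self (x : α) : add (neg x) x = one := by
  have h := luk x one
  rw [add_one, neg_one, zero_add'] at h
  exact h.symm

theorem add_neg_self (x : α) : add x (neg x) = one := by
  rw [add_comm]; exact neg_add_self x

/-- Order relation: `x ≤ y` iff `¬x ⊕ y = 1`. -/
def mle (x y : α) : Prop := add (neg x) y = one

theorem mle_refl (x : α) : mle x x := neg_add_self x
theorem mle_one (x : α) : mle x one := add_one (neg x)
theorem zero_mle (x : α) : mle zero x := by
  show add (neg zero) x = one
  exact one_add x

theorem mle_add_right (x z : α) : mle x (add x z) := by
  show add (neg x) (add x z) = one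
  rw [add_assoc, neg_add_self, one_add]

theorem sup_comm' (x y : α) : sup x y = sup y x := luk x y

theorem sup_of_mle {x y : α} (h : mle x y) : sup x y = y := by
  unfold sup
  rw [h, neg_one, zero_add']

theorem mle_sup_right (x y : α) : mle y (sup x y) := by
  show add (neg y) (add (neg (add (neg x) y)) y) = one
  rw [add_comm (neg (add (neg x) y)) y, add_assoc, neg_add_self, one_add]

theorem mle_sup_left (x y : α) : mle x (sup x y) := by
  rw [sup_comm']; exact mle_sup_right y x

theorem eq_add_of_mle {x y : α} (h : mle x y) : ∃ c, y = add x c := by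
  refine ⟨neg (add (neg y) x), ?_⟩
  have h2 := luk x y
  unfold mle at h
  rw [h, neg_one, zero_add'] at h2
  rw [add_comm]; exact h2

theorem mle_trans {x y z : α} (h1 : mle x y) (h2 : mle y z) : mle x z := by
  obtain ⟨c, rfl⟩ := eq_add_of_mle h1
  obtain ⟨d, rfl⟩ := eq_add_of_mle h2
  show add (neg x) (add (add x c) d) = one
  rw [add_assoc, add_assoc, neg_add_self, one_add, one_add]

theorem mle_antisymm {x y : α} (h1 : mle x y) (h2 : mle y x) : x = y := by
  have e1 : sup x y = y := sup_of_mle h1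
  have e2 : sup y x = x := sup_of_mle h2
  rw [← e1, sup_comm', e2]

theorem add_mle_add_left {x y : α} (h : mle x y) (z : α) : mle (add z x) (add z y) := by
  obtain ⟨c, rfl⟩ := eq_add_of_mle h
  rw [add_assoc]
  exact mle_add_right _ _

theorem add_mle_add_right {x y : α} (h : mle x y) (z : α) : mle (add x z) (add y z) := by
  rw [add_comm x z, add_comm y z]; exact add_mle_add_left h z

theorem add_mle_add {a b c d : α} (h1 : mle a b) (h2 : mle c d) :
    mle (add a c) (add b d) :=
  mle_trans (add_mle_add_right h1 c) (add_mle_add_left h2 b)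

theorem neg_mle_neg {x y : α} (h : mle x y) : mle (neg y) (neg x) := by
  show add (neg (neg y)) (neg x) = one
  rw [neg_neg, add_comm]; exact h

/-- truncated product -/
def tmul (x y : α) : α := neg (add (neg x) (neg y))

theorem neg_tmul (x y : α) : neg (tmul x y) = add (neg x) (neg y) := neg_neg _

theorem tmul_comm (x y : α) : tmul x y = tmul y x := by unfold tmul; rw [add_comm]

theorem tmul_one (x : α) : tmul x one = x := by
  unfold tmul; rw [neg_one, add_zero, neg_neg]

theorem neg_tmul_neg (a b : α) : neg (tmul a (neg b)) = add (neg a) b := by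
  rw [neg_tmul, neg_neg]

theorem tmul_mle_left (x y : α) : mle (tmul x y) x := by
  show add (neg (tmul x y)) x = one
  rw [neg_tmul, add_comm (neg x) (neg y), ← add_assoc, neg_add_self, add_one]


theorem tmul_mle_right (x y : α) : mle (tmul x y) y := by
  rw [tmul_comm]; exact tmul_mle_left y x

theorem tmul_mle_tmul_left {x y : α} (h : mle x y) (z : α) :
    mle (tmul z x) (tmul z y) := by
  have := neg_mle_neg (add_mle_add_left (neg_mle_neg h) (neg z))
  exact this

theorem tmul_mle_tmul_right {x y : α} (h : mle x y) (z : α) :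
    mle (tmul x z) (tmul y z) := by
  rw [tmul_comm x z, tmul_comm y z]; exact tmul_mle_tmul_left h z

/-- Residuation. -/
theorem res {a b c : α} : mle (tmul a (neg b)) c ↔ mle a (add b c) := by
  unfold mle
  rw [neg_tmul_neg, ← add_assoc]

theorem sup_idem (x : α) : sup x x = x := sup_of_mle (mle_refl x)
theorem sup_one (x : α) : sup x one = one := sup_of_mle (mle_one x)

theorem sup_eq_add₂ (x y : α) : sup x y = add (tmul x (neg y)) y := by
  unfold sup tmul; rw [neg_neg]

theorem sup_eq_add (x y : α) : sup x y = add (tmul y (neg x)) x := by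
  rw [sup_comm']; exact sup_eq_add₂ y x

theorem sup_mle_sup_left {y z : α} (h : mle y z) (x : α) :
    mle (sup x y) (sup x z) := by
  rw [sup_eq_add x y, sup_eq_add x z]
  exact add_mle_add_right (tmul_mle_tmul_right h (neg x)) x

theorem sup_mle {x y z : α} (h1 : mle x z) (h2 : mle y z) : mle (sup x y) z := by
  have s1 : mle (sup x y) (sup x z) := sup_mle_sup_left h2 x
  have s2 : mle (sup x z) (sup z z) := by
    rw [sup_comm' x z, sup_comm' z z]; exact sup_mle_sup_left h1 z
  rw [sup_idem] at s2
  exact mle_trans s1 s2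

theorem inf_mle_left (x y : α) : mle (inf x y) x := by
  have := neg_mle_neg (mle_sup_left (neg x) (neg y))
  rwa [neg_neg] at this

theorem inf_mle_right (x y : α) : mle (inf x y) y := by
  have := neg_mle_neg (mle_sup_right (neg x) (neg y))
  rwa [neg_neg] at this

theorem mle_inf {x y z : α} (h1 : mle z x) (h2 : mle z y) : mle z (inf x y) := by
  have := neg_mle_neg (sup_mle (neg_mle_neg h1) (neg_mle_neg h2))
  rwa [neg_neg] at this

theorem inf_comm' (x y : α) : inf x y = inf y x := by
  unfold inf; rw [sup_comm']

theorem inf_of_mle {x y : α} (h : mle x y) : inf x y = x := by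
  unfold inf
  rw [sup_comm', sup_of_mle (neg_mle_neg h), neg_neg]

theorem neg_inf (x y : α) : neg (inf x y) = sup (neg x) (neg y) := neg_neg _

theorem inf_eq_tmul (x y : α) : inf x y = tmul x (add (neg x) y) := by
  unfold inf
  rw [sup_comm']
  unfold sup tmul
  rw [neg_neg, add_comm y (neg x), add_comm (neg (add (neg x) y)) (neg x)]

theorem add_inf (x y z : α) : add x (inf y z) = inf (add x y) (add x z) := by
  apply mle_antisymm
  · exact mle_inf (add_mle_add_left (inf_mle_left y z) x)
      (add_mle_add_left (inf_mle_right y z) x)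
  · apply res.mp
    exact mle_inf (res.mpr (inf_mle_left (add x y) (add x z)))
      (res.mpr (inf_mle_right (add x y) (add x z)))

theorem tmul_sup (x y z : α) : tmul x (sup y z) = sup (tmul x y) (tmul x z) := by
  apply mle_antisymm
  · have hy : mle y (add (neg x) (sup (tmul x y) (tmul x z))) := by
      apply res.mp
      rw [neg_neg, tmul_comm]
      exact mle_sup_left _ _
    have hz : mle z (add (neg x) (sup (tmul x y) (tmul x z))) := by
      apply res.mp
      rw [neg_neg, tmul_comm]
      exact mle_sup_right _ _
    have := res.mpr (sup_mle hy hz)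
    rwa [neg_neg, tmul_comm] at this
  · exact sup_mle (tmul_mle_tmul_left (mle_sup_left y z) x)
      (tmul_mle_tmul_left (mle_sup_right y z) x)

theorem add_inf_tmul (x y : α) : add (inf x y) (tmul x (neg y)) = x := by
  have h1 : inf x y = tmul x (neg (tmul x (neg y))) := by
    rw [neg_tmul_neg]; exact inf_eq_tmul x y
  rw [h1, ← sup_eq_add₂]
  rw [sup_comm']
  exact sup_of_mle (tmul_mle_left x (neg y))

/-- Key disjointness: `(x ⊖ y) ∧ (y ⊖ x) = 0`. -/
theorem inf_tmul_zero (x y : α) : inf (tmul x (neg y)) (tmul y (neg x)) = zero := by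
  set a := tmul x (neg y) with ha
  set b := tmul y (neg x) with hb
  set m := inf x y with hm
  have h1 : add m a = x := add_inf_tmul x y
  have h2 : add m b = y := by rw [hm, inf_comm']; exact add_inf_tmul y x
  have h3 : add m (inf a b) = m := by rw [add_inf, h1, h2]
  have h4 : mle (inf a b) (neg m) := by
    have c1 : mle (inf a b) (neg y) := mle_trans (inf_mle_left a b)
      (by rw [ha]; exact tmul_mle_right x (neg y))
    have c2 : mle (neg y) (neg m) := by
      rw [hm, neg_inf]; exact mle_sup_right _ _
    exact mle_trans c1 c2
  have h5 : inf (neg m) (inf a b) = inf a b := by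
    rw [inf_comm']; exact inf_of_mle h4
  rw [← h5, inf_eq_tmul, neg_neg, h3]
  show neg (add (neg (neg m)) (neg m)) = zero
  rw [neg_neg, add_neg_self, neg_one]

theorem sup_res_one (x y : α) :
    sup (add (neg x) y) (add (neg y) x) = one := by
  rw [← neg_tmul_neg x y, ← neg_tmul_neg y x, ← neg_inf, inf_tmul_zero]
  rfl

/-- iterated truncated product -/
def tpow (x : α) : ℕ → α
  | 0 => one
  | k + 1 => tmul x (tpow x k)

theorem sup_tpow_one {u v : α} (h : sup u v = one) (k : ℕ) :
    sup u (tpow v k) = one := by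
  induction k with
  | zero => exact sup_one u
  | succ k ih =>
    have hv : mle v (sup u (tpow v (k + 1))) := by
      have e : v = sup (tmul v u) (tpow v (k + 1)) := by
        conv_lhs => rw [← tmul_one v, ← ih, tmul_sup]
        rfl
      nth_rewrite 1 [e]
      exact sup_mle (mle_trans (tmul_mle_right v u) (mle_sup_left _ _))
        (mle_sup_right _ _)
    have h1 : mle (sup u v) (sup u (tpow v (k + 1))) :=
      sup_mle (mle_sup_left _ _) hv
    rw [h] at h1
    exact mle_antisymm (mle_one _) h1

theorem neg_tpow_neg (x : α) (k : ℕ) : neg (tpow (neg x) k) = nsum k x := by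
  induction k with
  | zero => exact neg_one
  | succ k ih =>
    show neg (tmul (neg x) (tpow (neg x) k)) = add x (nsum k x)
    rw [neg_tmul, neg_neg, ih]

theorem tpow_neg_eq (x : α) (k : ℕ) : tpow (neg x) k = neg (nsum k x) := by
  rw [← neg_tpow_neg x k, neg_neg]

theorem nsum_mle_nsum {x y : α} (h : mle x y) (k : ℕ) :
    mle (nsum k x) (nsum k y) := by
  induction k with
  | zero => exact mle_refl zero
  | succ k ih => exact add_mle_add h ih

theorem nsum_add (k : ℕ) (x y : α) :
    nsum k (add x y) = add (nsum k x) (nsum k y) := by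
  induction k with
  | zero => exact (add_zero zero).symm
  | succ k ih =>
    show add (add x y) (nsum k (add x y)) = add (add x (nsum k x)) (add y (nsum k y))
    rw [ih]
    ac_rfl

/-- Key bound 1: `y ⊕ kx ≤ (k+1)x ∨ (k+1)y`. -/
theorem key1 (x y : α) (k : ℕ) :
    mle (add y (nsum k x)) (sup (add x (nsum k x)) (add y (nsum k y))) := by
  set t := add y (nsum k x) with hT
  have h1 : sup (add (neg y) x) (tpow (add (neg x) y) k) = one :=
    sup_tpow_one (sup_res_one y x) k
  have ht : t = sup (tmul t (add (neg y) x)) (tmul t (tpow (add (neg x) y) k)) := by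
    conv_lhs => rw [← tmul_one t, ← h1, tmul_sup]
  have b1 : mle (tmul t (add (neg y) x)) (add x (nsum k x)) := by
    rw [← neg_tmul_neg y x]
    apply res.mpr
    rw [add_assoc, ← sup_eq_add₂]
    exact add_mle_add_right (mle_sup_left y x) (nsum k x)
  have b2 : mle (tmul t (tpow (add (neg x) y) k)) (add y (nsum k y)) := by
    rw [← neg_tmul_neg x y, tpow_neg_eq]
    apply res.mpr
    have e : add (nsum k (tmul x (neg y))) (add y (nsum k y))
        = add y (nsum k (sup x y)) := by
      rw [sup_eq_add₂, nsum_add]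
      ac_rfl
    rw [e]
    exact add_mle_add_left (nsum_mle_nsum (mle_sup_left x y) k) y
  rw [ht]
  exact sup_mle (mle_trans b1 (mle_sup_left _ _)) (mle_trans b2 (mle_sup_right _ _))

/-- Key bound 2: `(k+1)x ∧ (k+1)y ≤ y ⊕ kx`. -/
theorem key2 (x y : α) (k : ℕ) :
    mle (inf (add x (nsum k x)) (add y (nsum k y))) (add y (nsum k x)) := by
  set s := inf (add x (nsum k x)) (add y (nsum k y)) with hS
  have h1 : sup (add (neg x) y) (tpow (add (neg y) x) k) = one :=
    sup_tpow_one (sup_res_one x y) k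
  have hs : s = sup (tmul s (add (neg x) y)) (tmul s (tpow (add (neg y) x) k)) := by
    conv_lhs => rw [← tmul_one s, ← h1, tmul_sup]
  have b1 : mle (tmul s (add (neg x) y)) (add y (nsum k x)) := by
    rw [← neg_tmul_neg x y]
    apply res.mpr
    have e : add (tmul x (neg y)) (add y (nsum k x))
        = add (sup x y) (nsum k x) := by
      rw [sup_eq_add₂]; ac_rfl
    rw [e]
    exact mle_trans (inf_mle_left _ _)
      (add_mle_add_right (mle_sup_left x y) (nsum k x))
  have b2 : mle (tmul s (tpow (add (neg y) x) k)) (add y (nsum k x)) := by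
    rw [← neg_tmul_neg y x, tpow_neg_eq]
    apply res.mpr
    have e : add (nsum k (tmul y (neg x))) (add y (nsum k x))
        = add y (nsum k (sup y x)) := by
      rw [sup_eq_add₂, nsum_add]
      ac_rfl
    rw [e]
    exact mle_trans (inf_mle_right _ _)
      (add_mle_add_left (nsum_mle_nsum (mle_sup_left y x) k) y)
  rw [hs]
  exact sup_mle b1 b2

/-- `a ⊕ (b ∨ c) ≤ (a ⊕ b) ∨ (a ⊕ c)`. -/
theorem add_sup_mle (a b c : α) :
    mle (add a (sup b c)) (sup (add a b) (add a c)) := by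
  set T := add a (sup b c) with hTdef
  have h1 : sup (add (neg b) c) (add (neg c) b) = one := sup_res_one b c
  have ht : T = sup (tmul T (add (neg b) c)) (tmul T (add (neg c) b)) := by
    conv_lhs => rw [← tmul_one T, ← h1, tmul_sup]
  have b1 : mle (tmul T (add (neg b) c)) (add a c) := by
    rw [← neg_tmul_neg b c]
    apply res.mpr
    have e : add (tmul b (neg c)) (add a c) = add a (sup b c) := by
      rw [sup_eq_add₂]; ac_rfl
    rw [e]
    exact mle_refl T
  have b2 : mle (tmul T (add (neg c) b)) (add a b) := by
    rw [← neg_tmul_neg c b]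
    apply res.mpr
    have e : add (tmul c (neg b)) (add a b) = add a (sup b c) := by
      rw [sup_comm', sup_eq_add₂]; ac_rfl
    rw [e]
    exact mle_refl T
  rw [ht]
  exact sup_mle (mle_trans b1 (mle_sup_right _ _)) (mle_trans b2 (mle_sup_left _ _))

theorem nsum_sup (n : ℕ) (x y : α) :
    nsum n (sup x y) = sup (nsum n x) (nsum n y) := by
  induction n with
  | zero => exact (sup_idem zero).symm
  | succ k ih =>
    show add (sup x y) (nsum k (sup x y)) = sup (add x (nsum k x)) (add y (nsum k y))
    rw [ih]
    set R := sup (add x (nsum k x)) (add y (nsum k y)) with hR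
    apply mle_antisymm
    · -- ≤
      have step1 : mle (add (sup x y) (sup (nsum k x) (nsum k y)))
          (sup (add (sup x y) (nsum k x)) (add (sup x y) (nsum k y))) :=
        add_sup_mle _ _ _
      have c1 : mle (add (sup x y) (nsum k x)) R := by
        have e : add (sup x y) (nsum k x) = add (nsum k x) (sup x y) := add_comm _ _
        rw [e]
        refine mle_trans (add_sup_mle (nsum k x) x y) ?_
        apply sup_mle
        · rw [add_comm]; exact mle_sup_left _ _
        · rw [add_comm]; exact key1 x y k
      have c2 : mle (add (sup x y) (nsum k y)) R := by
        have e : add (sup x y) (nsum k y) = add (nsum k y) (sup y x) := by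
          rw [sup_comm']; exact add_comm _ _
        rw [e]
        refine mle_trans (add_sup_mle (nsum k y) y x) ?_
        apply sup_mle
        · rw [add_comm]; exact mle_sup_right _ _
        · rw [add_comm, hR, sup_comm']
          exact key1 y x k
      exact mle_trans step1 (sup_mle c1 c2)
    · -- ≥
      exact sup_mle (add_mle_add (mle_sup_left x y) (mle_sup_left _ _))
        (add_mle_add (mle_sup_right x y) (mle_sup_right _ _))

theorem nsum_inf (n : ℕ) (x y : α) :
    nsum n (inf x y) = inf (nsum n x) (nsum n y) := by
  induction n with
  | zero => exact (inf_of_mle (mle_refl zero)).symm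
  | succ k ih =>
    show add (inf x y) (nsum k (inf x y)) = inf (add x (nsum k x)) (add y (nsum k y))
    rw [ih]
    set R := inf (add x (nsum k x)) (add y (nsum k y)) with hR
    have expand : add (inf x y) (inf (nsum k x) (nsum k y))
        = inf (inf (add x (nsum k x)) (add y (nsum k x)))
              (inf (add x (nsum k y)) (add y (nsum k y))) := by
      rw [add_inf]
      congr 1
      · rw [add_comm, add_inf, add_comm (nsum k x) x, add_comm (nsum k x) y]
      · rw [add_comm, add_inf, add_comm (nsum k y) x, add_comm (nsum k y) y]
    rw [expand]
    apply mle_antisymm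
    · exact mle_inf (mle_trans (inf_mle_left _ _) (inf_mle_left _ _))
        (mle_trans (inf_mle_right _ _) (inf_mle_right _ _))
    · apply mle_inf
      · exact mle_inf (inf_mle_left _ _) (key2 x y k)
      · refine mle_inf ?_ (inf_mle_right _ _)
        have := key2 y x k
        rwa [inf_comm'] at this

theorem nsum_zero' (k : ℕ) : nsum k (zero : α) = zero := by
  induction k with
  | zero => rfl
  | succ k ih => show add zero (nsum k zero) = zero; rw [ih, add_zero]

theorem nsum_one' {k : ℕ} (hk : 0 < k) : nsum k (one : α) = one := by
  obtain ⟨m, rfl⟩ := Nat.exists_eq_add_of_lt hk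
  rw [Nat.zero_add]
  show add one (nsum m one) = one
  exact one_add _

end MVAlg

open MVAlg in
/-- In a finite MV-algebra `A` with `n ≥ |A|`, the map `x ↦ nx` preserves `1`, `0`,
binary joins and binary meets. -/
theorem mv_nsum_endomorphism {α : Type*} [MVAlg α] [Fintype α]
    (n : ℕ) (hn : Fintype.card α ≤ n) :
    nsum n (one : α) = one ∧
    nsum n (zero : α) = zero ∧
    (∀ x y : α, nsum n (sup x y) = sup (nsum n x) (nsum n y)) ∧
    (∀ x y : α, nsum n (inf x y) = inf (nsum n x) (nsum n y)) := by
  have hne : Nonempty α := ⟨MVAlg.zero⟩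
  have hpos : 0 < n := lt_of_lt_of_le Fintype.card_pos hn
  exact ⟨nsum_one' hpos, nsum_zero' n,
    fun x y => nsum_sup n x y, fun x y => nsum_inf n x y⟩
end

section
/- In a finite MV-algebra A with n ≥ |A|, the image of the map x ↦ nx equals the Boolean skeleton B(A) = {x ∈ A : x ⊕ x = x}: every nx is idempotent, and every idempotent x satisfies nx = x. -/
namespace MVAlgAux

open MVAlg

variable {α : Type*} [MVAlg α]

lemma mv_zero_add (x : α) : add zero x = x := by
  rw [MVAlg.add_comm]; exact MVAlg.add_zero x

lemma mv_top_add (x : α) : add (neg zero) x = neg zero := by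
  rw [MVAlg.add_comm]; exact MVAlg.add_neg_zero x

lemma mv_neg_add_self (x : α) : add (neg x) x = neg zero := by
  have h := MVAlg.luk x (neg zero)
  rw [MVAlg.add_neg_zero, MVAlg.neg_neg, mv_zero_add] at h
  exact h.symm

lemma mv_sup_comm (x y : α) : sup x y = sup y x := MVAlg.luk x y

lemma mv_sup_add_left (c a : α) : sup a (add c a) = add c a := by
  unfold sup
  have h : add (neg a) (add c a) = neg zero := by
    rw [MVAlg.add_comm c a, MVAlg.add_assoc, mv_neg_add_self, mv_top_add]
  rw [h, MVAlg.neg_neg, mv_zero_add]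

lemma mv_nsum_add (a b : ℕ) (x : α) :
    nsum (a + b) x = add (nsum a x) (nsum b x) := by
  induction a with
  | zero => simpa [nsum] using (mv_zero_add (nsum b x)).symm
  | succ k ih =>
    have h : k + 1 + b = (k + b) + 1 := by omega
    rw [h]
    show add x (nsum (k + b) x) = add (add x (nsum k x)) (nsum b x)
    rw [ih, MVAlg.add_assoc]

lemma mv_absorb {x p : α} (hp : add x p = p) (k : ℕ) :
    add (nsum k x) p = p := by
  induction k with
  | zero => exact mv_zero_add p
  | succ m ih =>
    show add (add x (nsum m x)) p = p
    rw [← MVAlg.add_assoc, ih, hp]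

lemma mv_nsum_idem {x : α} (hx : add x x = x) (m : ℕ) :
    nsum (m + 1) x = x := by
  induction m with
  | zero => show add x (nsum 0 x) = x; show add x zero = x; exact MVAlg.add_zero x
  | succ k ih =>
    show add x (nsum (k + 1) x) = x
    rw [ih, hx]

end MVAlgAux

open MVAlg MVAlgAux in
/-- In a finite MV-algebra `A` with `n ≥ |A|`, the image of `x ↦ nx` is exactly the
Boolean skeleton, i.e. the set of `⊕`-idempotent elements. -/
theorem mv_nsum_range_eq_booleanSkeleton {α : Type*} [MVAlg α] [Fintype α]
    (n : ℕ) (hn : Fintype.card α ≤ n) :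
    Set.range (fun x : α => nsum n x) = {x : α | MVAlg.add x x = x} := by
  ext y
  simp only [Set.mem_range, Set.mem_setOf_eq]
  constructor
  · rintro ⟨x, rfl⟩
    -- pigeonhole: the sequence k ↦ nsum k x, k = 0..n, repeats
    have hcard : Fintype.card α < Fintype.card (Fin (n + 1)) := by
      simpa using Nat.lt_succ_of_le hn
    obtain ⟨a, b, hab, heq⟩ :=
      Fintype.exists_ne_map_eq_of_card_lt (fun k : Fin (n + 1) => nsum (k : ℕ) x) hcard
    -- wlog i < j
    obtain ⟨i, j, hij, hijle, hrep⟩ :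
        ∃ i j : ℕ, i < j ∧ j ≤ n ∧ (nsum i x : α) = nsum j x := by
      rcases lt_or_gt_of_ne (fun h => hab (Fin.ext (by exact_mod_cast h)) :
          (a : ℕ) ≠ (b : ℕ)) with h | h
      · exact ⟨a, b, h, Nat.lt_succ_iff.mp b.isLt, heq⟩
      · exact ⟨b, a, h, Nat.lt_succ_iff.mp a.isLt, heq.symm⟩
    set p : α := nsum i x with hp
    -- from the repetition, x ⊕ p = p
    have hxp : add x p = p := by
      have hdecomp : nsum j x = add (nsum (j - (i + 1)) x) (add x p) := by
        have h1 : j = (j - (i + 1)) + (i + 1) := by omega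
        calc nsum j x = nsum ((j - (i + 1)) + (i + 1)) x := by rw [← h1]
          _ = add (nsum (j - (i + 1)) x) (nsum (i + 1) x) := mv_nsum_add _ _ x
          _ = add (nsum (j - (i + 1)) x) (add x p) := rfl
      have h1 : sup p (add x p) = add x p := mv_sup_add_left x p
      have h2 : sup (add x p) (nsum j x) = nsum j x := by
        rw [hdecomp]; exact mv_sup_add_left _ _
      rw [← hrep] at h2
      rw [mv_sup_comm, h1] at h2
      exact h2
    -- hence nsum n x = p and p is idempotent
    have hnp : nsum n x = p := by
      have h1 : n = (n - i) + i := by omega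
      rw [h1, mv_nsum_add, mv_absorb hxp]
    have hpp : add p p = p := mv_absorb hxp i
    rw [hnp]; exact hpp
  · intro hy
    have hne : Nonempty α := ⟨MVAlg.zero⟩
    have hpos : 1 ≤ n := le_trans Fintype.card_pos hn
    obtain ⟨m, rfl⟩ : ∃ m, n = m + 1 := ⟨n - 1, by omega⟩
    exact ⟨y, mv_nsum_idem hy m⟩
end

section
/- (Switch Lemma) Let A be a finite lattice algebra, M an A-valued Kripke model over a crisp frame, and T^a the recursive translation into classical modal formulas defined in the context. Then for every modal formula φ, every world w, and every a ∈ A: the truth value of φ at w in M equals a if and only if the classical translation T^a(φ) is true at w in the associated two-valued model M*. -/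
open Classical in
/-- Modal formulas over propositional variables `τ`, built with the lattice connectives
`∧`, `∨`, an `n`-ary connective for each symbol of the signature `Sig`, and the
modalities `◇`, `□`. -/
inductive MF (τ : Type*) (Sig : Type*) (ar : Sig → ℕ) : Type _ where
  | var : τ → MF τ Sig ar
  | conj : MF τ Sig ar → MF τ Sig ar → MF τ Sig ar
  | disj : MF τ Sig ar → MF τ Sig ar → MF τ Sig ar
  | app : (s : Sig) → (Fin (ar s) → MF τ Sig ar) → MF τ Sig ar
  | dia : MF τ Sig ar → MF τ Sig ar
  | box : MF τ Sig ar → MF τ Sig ar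

/-- Classical (two-valued) modal formulas over variables `σ`. -/
inductive BMF (σ : Type*) : Type _ where
  | var : σ → BMF σ
  | tru : BMF σ
  | fls : BMF σ
  | and : BMF σ → BMF σ → BMF σ
  | or : BMF σ → BMF σ → BMF σ
  | not : BMF σ → BMF σ
  | dia : BMF σ → BMF σ
  | box : BMF σ → BMF σ

/-- Finite disjunction. -/
def bigOr {σ : Type*} (l : List (BMF σ)) : BMF σ := l.foldr .or .fls

/-- Finite conjunction. -/
def bigAnd {σ : Type*} (l : List (BMF σ)) : BMF σ := l.foldr .and .tru

variable {W τ A : Type*} {Sig : Type*} {ar : Sig → ℕ}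

/-- The `A`-valued semantics of many-valued modal formulas in an `A`-valued Kripke
model `⟨W, R, V⟩` over a crisp frame; `A` is a (finite, hence complete) lattice,
`I` interprets each signature symbol by an operation on `A`. -/
def mval [CompleteLattice A] (I : (s : Sig) → (Fin (ar s) → A) → A)
    (R : W → W → Prop) (V : τ → W → A) : MF τ Sig ar → W → A
  | .var p, w => V p w
  | .conj φ ψ, w => mval I R V φ w ⊓ mval I R V ψ w
  | .disj φ ψ, w => mval I R V φ w ⊔ mval I R V ψ w
  | .app s f, w =>
      let g : (i : Fin (ar s)) → W → A := fun i => mval I R V (f i)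
      I s (fun i => g i w)
  | .dia φ, w => ⨆ v, ⨆ _ : R w v, mval I R V φ v
  | .box φ, w => ⨅ v, ⨅ _ : R w v, mval I R V φ v

/-- Classical Kripke semantics of two-valued modal formulas. -/
def csat (R : W → W → Prop) (V : σ → W → Prop) : BMF σ → W → Prop
  | .var p, w => V p w
  | .tru, _ => True
  | .fls, _ => False
  | .and φ ψ, w => csat R V φ w ∧ csat R V ψ w
  | .or φ ψ, w => csat R V φ w ∨ csat R V ψ w
  | .not φ, w => ¬ csat R V φ w
  | .dia φ, w => ∃ v, R w v ∧ csat R V φ v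
  | .box φ, w => ∀ v, R w v → csat R V φ v

variable [CompleteLattice A] [Fintype A] [DecidableEq A]
  [DecidableRel (LE.le (α := A))]

/-- The translation `T^a` of many-valued modal formulas into classical modal formulas
over the variables `{p^a : p ∈ τ, a ∈ A}`. -/
noncomputable def mtrans (I : (s : Sig) → (Fin (ar s) → A) → A) : MF τ Sig ar → A → BMF (τ × A)
  | .var p, a => .var (p, a)
  | .conj φ ψ, a =>
      bigOr (((Finset.univ : Finset (A × A)).filter (fun bc => bc.1 ⊓ bc.2 = a)).toList.map
        (fun bc => .and (mtrans I φ bc.1) (mtrans I ψ bc.2)))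
  | .disj φ ψ, a =>
      bigOr (((Finset.univ : Finset (A × A)).filter (fun bc => bc.1 ⊔ bc.2 = a)).toList.map
        (fun bc => .and (mtrans I φ bc.1) (mtrans I ψ bc.2)))
  | .app s f, a =>
      let T : (i : Fin (ar s)) → A → BMF (τ × A) := fun i => mtrans I (f i)
      bigOr (((Finset.univ : Finset (Fin (ar s) → A)).filter (fun b => I s b = a)).toList.map
        (fun b => bigAnd ((List.finRange (ar s)).map (fun i => T i (b i)))))
  | .dia φ, a =>
      let T : A → BMF (τ × A) := mtrans I φ
      .and
        (bigOr (((Finset.univ : Finset (Finset A)).filter (fun S => S.sup id = a)).toList.map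
          (fun S => bigAnd (S.toList.map (fun b => .dia (T b))))))
        (.box (bigOr (((Finset.univ : Finset A).filter (fun b => b ≤ a)).toList.map T)))
  | .box φ, a =>
      let T : A → BMF (τ × A) := mtrans I φ
      .and
        (bigOr (((Finset.univ : Finset (Finset A)).filter (fun S => S.inf id = a)).toList.map
          (fun S => bigAnd (S.toList.map (fun b => .dia (T b))))))
        (.box (bigOr (((Finset.univ : Finset A).filter (fun b => a ≤ b)).toList.map T)))
termination_by structural φ _ => φ

/-- The two-valued valuation of the classical model `M*` associated to an `A`-valued
model with valuation `V`:  `M*, w ⊨ p^a` iff `V p w = a`. -/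
def Vstar (V : τ → W → A) : τ × A → W → Prop := fun pa w => V pa.1 w = pa.2


theorem csat_bigOr {σ : Type*} (R : W → W → Prop) (V : σ → W → Prop)
    (l : List (BMF σ)) (w : W) :
    csat R V (bigOr l) w ↔ ∃ ψ ∈ l, csat R V ψ w := by
  induction l with
  | nil => simp [bigOr, csat]
  | cons h t ih =>
    simp only [bigOr, List.foldr_cons] at ih ⊢
    show csat R V h w ∨ csat R V _ w ↔ _
    simp [ih]

theorem csat_bigAnd {σ : Type*} (R : W → W → Prop) (V : σ → W → Prop)
    (l : List (BMF σ)) (w : W) :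
    csat R V (bigAnd l) w ↔ ∀ ψ ∈ l, csat R V ψ w := by
  induction l with
  | nil => simp [bigAnd, csat]
  | cons h t ih =>
    simp only [bigAnd, List.foldr_cons] at ih ⊢
    show csat R V h w ∧ csat R V _ w ↔ _
    simp [ih]

theorem iSup_eq_attained_sup (f : W → A) (P : W → Prop)
    [DecidablePred fun b : A => ∃ v, P v ∧ f v = b] :
    (⨆ v, ⨆ _ : P v, f v)
      = (Finset.univ.filter (fun b : A => ∃ v, P v ∧ f v = b)).sup id := by
  apply le_antisymm
  · refine iSup_le fun v => iSup_le fun hv => ?_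
    have hm : f v ∈ Finset.univ.filter (fun b : A => ∃ v, P v ∧ f v = b) := by
      simp only [Finset.mem_filter, Finset.mem_univ, true_and]
      exact ⟨v, hv, rfl⟩
    exact Finset.le_sup (f := id) hm
  · refine Finset.sup_le fun b hb => ?_
    simp only [Finset.mem_filter, Finset.mem_univ, true_and] at hb
    obtain ⟨v, hv, rfl⟩ := hb
    exact le_iSup_of_le v (le_iSup_of_le hv le_rfl)

theorem iInf_eq_attained_inf (f : W → A) (P : W → Prop)
    [DecidablePred fun b : A => ∃ v, P v ∧ f v = b] :
    (⨅ v, ⨅ _ : P v, f v)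
      = (Finset.univ.filter (fun b : A => ∃ v, P v ∧ f v = b)).inf id := by
  apply le_antisymm
  · refine Finset.le_inf fun b hb => ?_
    simp only [Finset.mem_filter, Finset.mem_univ, true_and] at hb
    obtain ⟨v, hv, rfl⟩ := hb
    exact iInf_le_of_le v (iInf_le_of_le hv le_rfl)
  · refine le_iInf fun v => le_iInf fun hv => ?_
    have hm : f v ∈ Finset.univ.filter (fun b : A => ∃ v, P v ∧ f v = b) := by
      simp only [Finset.mem_filter, Finset.mem_univ, true_and]
      exact ⟨v, hv, rfl⟩
    exact Finset.inf_le (f := id) hm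

/-- **Switch Lemma.**  For every many-valued modal formula `φ`, world `w`, and
`a ∈ A`: `⟦φ⟧^M_w = a` iff `M*, w ⊨ T^a(φ)`. -/
theorem switch_lemma (I : (s : Sig) → (Fin (ar s) → A) → A)
    (R : W → W → Prop) (V : τ → W → A) (φ : MF τ Sig ar) (w : W) (a : A) :
    mval I R V φ w = a ↔ csat R (Vstar V) (mtrans I φ a) w := by
  induction φ generalizing w a with
  | var p => simp [mval, mtrans, csat, Vstar]
  | conj φ ψ ihφ ihψ =>
    simp only [mval, mtrans, csat_bigOr, List.mem_map, Finset.mem_toList,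
      Finset.mem_filter, Finset.mem_univ, true_and, csat]
    constructor
    · rintro rfl
      exact ⟨_, ⟨(mval I R V φ w, mval I R V ψ w), rfl, rfl⟩,
        (ihφ w _).mp rfl, (ihψ w _).mp rfl⟩
    · rintro ⟨x, ⟨⟨b, c⟩, rfl, rfl⟩, h1, h2⟩
      rw [show mval I R V φ w = b from (ihφ w b).mpr h1,
        show mval I R V ψ w = c from (ihψ w c).mpr h2]
  | disj φ ψ ihφ ihψ =>
    simp only [mval, mtrans, csat_bigOr, List.mem_map, Finset.mem_toList,
      Finset.mem_filter, Finset.mem_univ, true_and, csat]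
    constructor
    · rintro rfl
      exact ⟨_, ⟨(mval I R V φ w, mval I R V ψ w), rfl, rfl⟩,
        (ihφ w _).mp rfl, (ihψ w _).mp rfl⟩
    · rintro ⟨x, ⟨⟨b, c⟩, rfl, rfl⟩, h1, h2⟩
      rw [show mval I R V φ w = b from (ihφ w b).mpr h1,
        show mval I R V ψ w = c from (ihψ w c).mpr h2]
  | app s f ih =>
    simp only [mval, mtrans, csat_bigOr, List.mem_map, Finset.mem_toList,
      Finset.mem_filter, Finset.mem_univ, true_and]
    constructor
    · rintro rfl
      refine ⟨_, ⟨fun i => mval I R V (f i) w, rfl, rfl⟩, ?_⟩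
      rw [csat_bigAnd]
      rintro ψ hψ
      rw [List.mem_map] at hψ
      obtain ⟨i, -, rfl⟩ := hψ
      exact (ih i w _).mp rfl
    · rintro ⟨x, ⟨b, rfl, rfl⟩, h⟩
      rw [csat_bigAnd] at h
      have hb : ∀ i, mval I R V (f i) w = b i := fun i =>
        (ih i w _).mpr (h _ (List.mem_map.mpr ⟨i, List.mem_finRange i, rfl⟩))
      show I s (fun i => mval I R V (f i) w) = I s b
      exact congrArg (I s) (funext hb)
  | dia φ ih =>
    simp only [mval, mtrans, csat, csat_bigOr, List.mem_map, Finset.mem_toList,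
      Finset.mem_filter, Finset.mem_univ, true_and]
    constructor
    · rintro rfl
      classical
      refine ⟨⟨_, ⟨Finset.univ.filter (fun b : A => ∃ v, R w v ∧ mval I R V φ v = b),
        (iSup_eq_attained_sup (mval I R V φ) (R w)).symm, rfl⟩, ?_⟩, ?_⟩
      · rw [csat_bigAnd]
        rintro ψ hψ
        rw [List.mem_map] at hψ
        obtain ⟨b, hb, rfl⟩ := hψ
        rw [Finset.mem_toList, Finset.mem_filter] at hb
        obtain ⟨-, v, hv, rfl⟩ := hb
        exact ⟨v, hv, (ih v _).mp rfl⟩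
      · intro v hv
        exact ⟨_, ⟨_, le_iSup_of_le v (le_iSup_of_le hv le_rfl), rfl⟩, (ih v _).mp rfl⟩
    · rintro ⟨⟨x, ⟨S, hS, rfl⟩, hmem⟩, hbox⟩
      rw [csat_bigAnd] at hmem
      apply le_antisymm
      · refine iSup_le fun v => iSup_le fun hv => ?_
        obtain ⟨y, ⟨b, hb, rfl⟩, hy⟩ := hbox v hv
        exact le_trans (le_of_eq ((ih v b).mpr hy)) hb
      · rw [← hS]
        refine Finset.sup_le fun b hb => ?_
        obtain ⟨v, hv, hcs⟩ :=
          hmem _ (List.mem_map.mpr ⟨b, Finset.mem_toList.mpr hb, rfl⟩)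
        exact le_trans (le_of_eq ((ih v b).mpr hcs).symm)
          (le_iSup_of_le v (le_iSup_of_le hv le_rfl))
  | box φ ih =>
    simp only [mval, mtrans, csat, csat_bigOr, List.mem_map, Finset.mem_toList,
      Finset.mem_filter, Finset.mem_univ, true_and]
    constructor
    · rintro rfl
      classical
      refine ⟨⟨_, ⟨Finset.univ.filter (fun b : A => ∃ v, R w v ∧ mval I R V φ v = b),
        (iInf_eq_attained_inf (mval I R V φ) (R w)).symm, rfl⟩, ?_⟩, ?_⟩
      · rw [csat_bigAnd]
        rintro ψ hψ
        rw [List.mem_map] at hψ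
        obtain ⟨b, hb, rfl⟩ := hψ
        rw [Finset.mem_toList, Finset.mem_filter] at hb
        obtain ⟨-, v, hv, rfl⟩ := hb
        exact ⟨v, hv, (ih v _).mp rfl⟩
      · intro v hv
        exact ⟨_, ⟨_, iInf_le_of_le v (iInf_le_of_le hv le_rfl), rfl⟩, (ih v _).mp rfl⟩
    · rintro ⟨⟨x, ⟨S, hS, rfl⟩, hmem⟩, hbox⟩
      rw [csat_bigAnd] at hmem
      apply le_antisymm
      · rw [← hS]
        refine Finset.le_inf fun b hb => ?_
        obtain ⟨v, hv, hcs⟩ :=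
          hmem _ (List.mem_map.mpr ⟨b, Finset.mem_toList.mpr hb, rfl⟩)
        exact le_trans (iInf_le_of_le v (iInf_le_of_le hv le_rfl))
          (le_of_eq ((ih v b).mpr hcs))
      · refine le_iInf fun v => le_iInf fun hv => ?_
        obtain ⟨y, ⟨b, hb, rfl⟩, hy⟩ := hbox v hv
        exact le_trans hb (le_of_eq ((ih v b).mpr hy).symm)
end
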